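/- If d(n) ≥ 0 for all but finitely many n and the Dirichlet series Ψ(s) = Σ_{n≥1} d(n) n^{-s} has finite abscissa of convergence σ_c, then Ψ has a singularity on the real axis at the point s = σ_c (i.e., Ψ cannot be analytically continued to a holomorphic function on any neighborhood of σ_c). -/

import Mathlib

/-!
Replacing the finitely many negative coefficients by `0` changes `Ψ` by an entire function, so we
may assume `d ≥ 0`. If `Ψ` continued holomorphically to a neighbourhood of `σc`, a disc around
`a = σc + 1` of radius `1 + δ` would lie in the domain of holomorphy, so the Taylor series of `Ψ`
at `a` would converge at `σ = σc - δ / 2`. Its `k`-th term is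
`Σ_n d(n) n^(-a) ((a - σ) log n)^k / k!`, so it is a double series of nonnegative terms;
summing over `k` first gives `Σ_n d(n) n^(-σ)`, which therefore converges although `σ < σc`.
-/

open Complex Filter Metric LSeries Topology
open scoped Nat

namespace LSeries

lemma logMul_iterate_apply (f : ℕ → ℂ) (k n : ℕ) : (logMul^[k] f) n = log n ^ k * f n := by
  induction k with
  | zero => simp
  | succ k ih => rw [Function.iterate_succ_apply', logMul, ih, pow_succ, mul_assoc, mul_left_comm]

noncomputable def realTerm (f : ℕ → ℝ) (x : ℝ) (n : ℕ) : ℝ :=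
  if n = 0 then 0 else f n / (n : ℝ) ^ x

lemma realTerm_nonneg {f : ℕ → ℝ} {n : ℕ} (hf : 0 ≤ f n) (x : ℝ) : 0 ≤ realTerm f x n := by
  unfold realTerm
  split_ifs
  exacts [le_rfl, by positivity]

lemma term_logMul_iterate_ofReal (f : ℕ → ℝ) (k : ℕ) (x : ℝ) (n : ℕ) :
    term (logMul^[k] fun n ↦ (f n : ℂ)) x n = ↑(Real.log n ^ k * realTerm f x n) := by
  rcases eq_or_ne n 0 with rfl | hn
  · simp [realTerm]
  · simp [realTerm, hn, logMul_iterate_apply, ofReal_cpow n.cast_nonneg,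
      ← natCast_log, mul_div_assoc]

lemma LSeriesSummable_ofReal_iff {f : ℕ → ℝ} {x : ℝ} :
    LSeriesSummable (fun n ↦ (f n : ℂ)) x ↔ Summable (realTerm f x) := by
  have hterm (n : ℕ) : term (fun n ↦ (f n : ℂ)) x n = realTerm f x n := by
    simpa using term_logMul_iterate_ofReal f 0 x n
  exact (summable_congr hterm).trans summable_ofReal

lemma hasSum_realTerm_mul_exp_series (f : ℕ → ℝ) (a b : ℝ) (n : ℕ) :
    HasSum (fun k ↦ realTerm f a n * ((b * Real.log n) ^ k / k !)) (realTerm f (a - b) n) := by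
  rcases eq_or_ne n 0 with rfl | hn
  · simp [realTerm, hasSum_zero]
  have hn₀ : (0 : ℝ) < n := by exact_mod_cast hn.bot_lt
  have hexp : Real.exp (b * Real.log n) = (n : ℝ) ^ b := by
    rw [Real.rpow_def_of_pos hn₀, mul_comm]
  have hseries := (NormedSpace.expSeries_div_hasSum_exp (b * Real.log n)).mul_left (realTerm f a n)
  rw [← Real.exp_eq_exp_ℝ, hexp] at hseries
  have hshift : realTerm f (a - b) n = realTerm f a n * (n : ℝ) ^ b := by
    simp only [realTerm, hn, if_false, Real.rpow_sub hn₀]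
    field_simp
  rwa [hshift]

end LSeries

lemma summable_tsum_swap_of_nonneg {β γ : Type*} {t : β → γ → ℝ} (ht : ∀ b c, 0 ≤ t b c)
    (hrow : ∀ b, Summable (t b)) (h : Summable fun b ↦ ∑' c, t b c) :
    Summable fun c ↦ ∑' b, t b c := by
  have hprod : Summable fun p : β × γ ↦ t p.1 p.2 :=
    (summable_prod_of_nonneg fun p ↦ ht p.1 p.2).mpr ⟨hrow, h⟩
  exact ((summable_prod_of_nonneg fun p ↦ ht p.2 p.1).mp hprod.prod_symm).2

lemma differentiable_LSeries_of_eventuallyEq_zero {f : ℕ → ℂ} (hf : f =ᶠ[atTop] 0) :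
    Differentiable ℂ (LSeries f) := by
  intro s
  have habs : abscissaOfAbsConv f ≤ (s.re - 1 : ℝ) :=
    abscissaOfAbsConv_le_of_forall_lt_LSeriesSummable fun y _ ↦
      (LSeriesSummable_congr' y hf).mpr LSeriesSummable_zero
  refine (LSeries_differentiableOn f).differentiableAt ((isOpen_re_gt_EReal _).mem_nhds ?_)
  exact habs.trans_lt (by exact_mod_cast sub_one_lt s.re)

lemma exists_ball_subset_union_re_gt {U : Set ℂ} (hU : IsOpen U) {c : ℝ} (hc : (c : ℂ) ∈ U) :
    ∃ δ > 0, ball ((c + 1 : ℝ) : ℂ) (1 + δ) ⊆ U ∪ {s | c < s.re} := by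
  obtain ⟨ε, hε, hεU⟩ := Metric.isOpen_iff.mp hU _ hc
  set δ := min (ε ^ 2 / 6) 1
  have hδ₀ : 0 < δ := by positivity
  refine ⟨δ, hδ₀, fun s hs ↦ ?_⟩
  rcases lt_or_ge c s.re with h | h
  · exact Or.inr h
  refine Or.inl (hεU ?_)
  have hδε : δ ≤ ε ^ 2 / 6 := min_le_left _ _
  have hδ_sq : δ ^ 2 ≤ δ := by nlinarith [min_le_right (ε ^ 2 / 6) 1]
  rw [mem_ball, dist_eq_re_im, Real.sqrt_lt' (by positivity)] at hs ⊢
  simp only [ofReal_re, ofReal_im, sub_zero] at hs ⊢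
  nlinarith [sq_pos_of_pos hε]

theorem LSeriesSummable_sub_of_differentiableOn_ball {f : ℕ → ℝ} (hf : ∀ n, 0 ≤ f n) {a r b : ℝ}
    (ha : abscissaOfAbsConv (fun n ↦ (f n : ℂ)) < a) {F : ℂ → ℂ}
    (hF : DifferentiableOn ℂ F (ball (a : ℂ) r))
    (hFa : F =ᶠ[𝓝 (a : ℂ)] LSeries fun n ↦ (f n : ℂ)) (hb : 0 ≤ b) (hbr : b < r) :
    LSeriesSummable (fun n ↦ (f n : ℂ)) (a - b : ℝ) := by
  set t : ℕ → ℕ → ℝ := fun k n ↦ realTerm f a n * ((b * Real.log n) ^ k / k !)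
  have ht : ∀ k n, 0 ≤ t k n := fun k n ↦
    mul_nonneg (realTerm_nonneg (hf n) a) (by have := Real.log_natCast_nonneg n; positivity)
  have ht_eq : ∀ k n, t k n = b ^ k / k ! * (Real.log n ^ k * realTerm f a n) := fun k n ↦ by
    simp only [t]; ring
  have hrow : ∀ k, Summable (t k) := fun k ↦ by
    have := LSeriesSummable_of_abscissaOfAbsConv_lt_re (f := logMul^[k] fun n ↦ (f n : ℂ))
      (s := a) (by simpa using ha)
    have hreal := summable_ofReal.mp ((summable_congr (term_logMul_iterate_ofReal f k a)).mp this)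
    exact (hreal.mul_left _).congr fun n ↦ (ht_eq k n).symm
  have hcoeff : ∀ k, (k ! : ℂ)⁻¹ • (((a - b : ℝ) : ℂ) - a) ^ k • iteratedDeriv k F a =
      ((∑' n, t k n : ℝ) : ℂ) := fun k ↦ by
    rw [hFa.iteratedDeriv_eq, LSeries_iteratedDeriv k (by simpa using ha), LSeries,
      tsum_congr (term_logMul_iterate_ofReal f k a), ← ofReal_tsum, tsum_congr (ht_eq k),
      tsum_mul_left]
    have hsign : ((-1 : ℂ) ^ k) * (-1) ^ k = 1 := by rw [← mul_pow]; norm_num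
    push_cast
    rw [sub_sub_cancel_left, smul_eq_mul, smul_eq_mul, neg_pow]
    linear_combination ((k ! : ℂ)⁻¹ * b ^ k * ∑' n : ℕ, log n ^ k * realTerm f a n) * hsign
  have htaylor : Summable fun k ↦ ∑' n, t k n := by
    have hmem : ((a - b : ℝ) : ℂ) ∈ ball (a : ℂ) r := by
      rw [mem_ball, dist_eq, ← ofReal_sub, norm_real, Real.norm_eq_abs, sub_sub_cancel_left,
        abs_neg, abs_of_nonneg hb]
      exact hbr
    exact summable_ofReal.mp ((Complex.hasSum_taylorSeries_on_ball hF hmem).summable.congr hcoeff)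
  rw [LSeriesSummable_ofReal_iff]
  exact (summable_tsum_swap_of_nonneg ht hrow htaylor).congr fun n ↦
    (hasSum_realTerm_mul_exp_series f a b n).tsum_eq

/-- **Landau's theorem**: a Dirichlet series with eventually nonnegative real coefficients
and finite abscissa of convergence `σc` has a singularity at the real point `s = σc`:
its sum cannot be continued holomorphically to any neighbourhood of `σc`. -/
theorem landau_singularity (d : ℕ → ℝ) (σc : ℝ)
    (hnn : ∀ᶠ n in atTop, 0 ≤ d n)
    (hconv : ∀ s : ℂ, σc < s.re → LSeriesSummable (fun n => (d n : ℂ)) s)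
    (hdiv : ∀ σ : ℝ, σ < σc → ¬ LSeriesSummable (fun n => (d n : ℂ)) (σ : ℂ)) :
    ¬ ∃ (F : ℂ → ℂ) (U : Set ℂ), IsOpen U ∧ (σc : ℂ) ∈ U ∧
        DifferentiableOn ℂ F (U ∪ {s : ℂ | σc < s.re}) ∧
        ∀ s : ℂ, σc < s.re → F s = LSeries (fun n => (d n : ℂ)) s := by
  rintro ⟨F, U, hU, hσU, hF, hFeq⟩
  set f : ℕ → ℂ := fun n ↦ (d n : ℂ)
  set g : ℕ → ℝ := fun n ↦ max (d n) 0
  have hfg : f =ᶠ[atTop] fun n ↦ (g n : ℂ) := hnn.mono fun n hn ↦ by simp [f, g, max_eq_left hn]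
  have habs : abscissaOfAbsConv (fun n ↦ (g n : ℂ)) < (σc + 1 : ℝ) := by
    rw [← abscissaOfAbsConv_congr' hfg]
    have hle : abscissaOfAbsConv f ≤ σc :=
      abscissaOfAbsConv_le_of_forall_lt_LSeriesSummable fun y hy ↦ hconv y (by simpa using hy)
    exact hle.trans_lt (by exact_mod_cast lt_add_one σc)
  have hG : F - LSeries (f - fun n ↦ (g n : ℂ)) =ᶠ[𝓝 ((σc + 1 : ℝ) : ℂ)]
      LSeries fun n ↦ (g n : ℂ) := by
    filter_upwards [(isOpen_lt continuous_const continuous_re).mem_nhds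
      (by simp : σc < ((σc + 1 : ℝ) : ℂ).re)] with s hs
    rw [Pi.sub_apply, hFeq s hs,
      LSeries_sub (hconv s hs) ((LSeriesSummable_congr' s hfg).mp (hconv s hs))]
    ring
  obtain ⟨δ, hδ, hball⟩ := exists_ball_subset_union_re_gt hU hσU
  have hsum := LSeriesSummable_sub_of_differentiableOn_ball (fun n ↦ le_max_right (d n) 0) habs
    ((hF.mono hball).sub (differentiable_LSeries_of_eventuallyEq_zero hfg.sub_eq).differentiableOn)
    hG (by linarith : 0 ≤ 1 + δ / 2) (by linarith : 1 + δ / 2 < 1 + δ)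
  refine hdiv (σc - δ / 2) (by linarith) ((LSeriesSummable_congr' _ hfg).mpr ?_)
  rwa [show σc + 1 - (1 + δ / 2) = σc - δ / 2 by ring] at hsum
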